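/- Let (R,M) be a two-dimensional regular local ring with M = (x,y)R and let e > 1 be an integer. Then the ideal I = (x, y^e)R is integrally closed. -/

import Mathlib

open Finset in
/-- `r` is integral over the ideal `I`: it satisfies an equation of integral dependence
`r^n + c₁ r^{n-1} + ⋯ + c_n = 0` with `c_j ∈ I^j`. -/
def Ideal.IsIntegralElem {R : Type*} [CommRing R] (I : Ideal R) (r : R) : Prop :=
  ∃ n : ℕ, 0 < n ∧ ∃ c : ℕ → R, (∀ j ∈ Finset.Icc 1 n, c j ∈ I ^ j) ∧
    r ^ n + ∑ j ∈ Finset.Icc 1 n, c j * r ^ (n - j) = 0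

/-- The integral closure `I_a` of an ideal `I`, as a set. -/
def Ideal.intCl {R : Type*} [CommRing R] (I : Ideal R) : Set R :=
  {r | I.IsIntegralElem r}

/-- Two ideals are projectively equivalent if some powers have the same integral closure. -/
def Ideal.ProjEquiv {R : Type*} [CommRing R] (I J : Ideal R) : Prop :=
  ∃ m n : ℕ, 0 < m ∧ 0 < n ∧ (I ^ m).intCl = (J ^ n).intCl

/-!
If a power of `y` lay in `(x)`, the maximal ideal would be minimal over a principal ideal and,
by Krull's principal ideal theorem, have height at most one. Otherwise the ideals `(x, y^k)` behave
like the filtration of a valuation: an element of `(x, y^k)` outside `(x, y^(k+1))` is a unit times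
`y^k` modulo `x`, so its `n`-th power lies outside `(x, y^(nk+1))`. For such an element with `k < e`,
every term `c_j r^(n-j)` of an equation of integral dependence over `(x, y^e)` does lie in
`(x, y^(nk+1))`, and hence so would `r^n`.
-/

open IsLocalRing Ideal

theorem pow_notMem_span_singleton_of_ringKrullDim_eq_two {R : Type*} [CommRing R]
    [IsNoetherianRing R] [IsLocalRing R] {x y : R}
    (hM : maximalIdeal R = span {x, y}) (hdim : ringKrullDim R = 2) (m : ℕ) :
    y ^ m ∉ span {x} := by
  intro hym
  have hmin : maximalIdeal R ∈ (span {x}).minimalPrimes := by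
    refine ⟨⟨inferInstance, hM ▸ span_mono (by simp)⟩, fun q ⟨hq, hxq⟩ _ ↦ ?_⟩
    rw [hM, span_le]
    rintro z (rfl | rfl)
    · exact hxq (mem_span_singleton_self z)
    · exact hq.mem_of_pow_mem m (hxq hym)
  have := height_le_one_of_isPrincipal_of_mem_minimalPrimes _ _ hmin
  rw [← WithBot.coe_le_coe, maximalIdeal_height_eq_ringKrullDim, hdim] at this
  norm_num at this

theorem Ideal.isIntegralElem_of_mem {R : Type*} [CommRing R] {I : Ideal R} {r : R}
    (hr : r ∈ I) : I.IsIntegralElem r :=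
  ⟨1, one_pos, fun _ ↦ -r, fun j hj ↦ by
    obtain rfl : j = 1 := by simpa using hj
    simpa using neg_mem hr, by simp⟩

section SpanPairPow

variable {R : Type*} [CommRing R] (x y : R)

theorem span_pair_pow_zero : span {x, y ^ 0} = ⊤ :=
  (eq_top_iff_one _).mpr (subset_span (by simp))

theorem span_pair_pow_antitone {a b : ℕ} (h : a ≤ b) :
    span {x, y ^ b} ≤ span {x, y ^ a} := by
  rw [span_le]
  rintro z (rfl | rfl)
  · exact subset_span (by simp)
  · rw [← Nat.add_sub_cancel' h, pow_add]
    exact mul_mem_right _ _ (subset_span (by simp))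

theorem span_pair_pow_mul_le (a b : ℕ) :
    span {x, y ^ a} * span {x, y ^ b} ≤ span {x, y ^ (a + b)} := by
  rw [mul_le]
  intro r hr s hs
  obtain ⟨c, d, rfl⟩ := mem_span_pair.mp hr
  obtain ⟨c', d', rfl⟩ := mem_span_pair.mp hs
  exact mem_span_pair.mpr ⟨c * c' * x + c * d' * y ^ b + d * y ^ a * c', d * d', by ring⟩

theorem span_pair_pow_pow_le (a j : ℕ) :
    span {x, y ^ a} ^ j ≤ span {x, y ^ (j * a)} := by
  induction j with
  | zero => rw [Nat.zero_mul, span_pair_pow_zero]; exact le_top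
  | succ j ih =>
    rw [pow_succ, Nat.succ_mul]
    exact (mul_mono_left ih).trans (span_pair_pow_mul_le x y _ _)

variable [IsLocalRing R] {x y} (hM : maximalIdeal R = span {x, y})
include hM

theorem exists_isUnit_dvd_sub_of_mem_span_pair_pow {r : R} {k : ℕ}
    (h : r ∈ span {x, y ^ k}) (h' : r ∉ span {x, y ^ (k + 1)}) :
    ∃ u, IsUnit u ∧ x ∣ r - u * y ^ k := by
  obtain ⟨c, u, rfl⟩ := mem_span_pair.mp h
  refine ⟨u, ?_, ⟨c, by ring⟩⟩
  by_contra hu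
  obtain ⟨α, β, rfl⟩ := mem_span_pair.mp (hM ▸ (mem_maximalIdeal u).mpr hu)
  exact h' (mem_span_pair.mpr ⟨c + α * y ^ k, β, by ring⟩)

theorem pow_mem_span_singleton_of_mem_span_pair_pow_succ {k : ℕ}
    (h : y ^ k ∈ span {x, y ^ (k + 1)}) : y ^ k ∈ span {x} := by
  obtain ⟨α, β, hαβ⟩ := mem_span_pair.mp h
  have hunit : IsUnit (1 - β * y) := isUnit_one_sub_self_of_mem_nonunits _
    ((mem_maximalIdeal _).mp (hM ▸ mul_mem_left _ β (subset_span (by simp))))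
  refine (unit_mul_mem_iff_mem _ hunit).mp (mem_span_singleton'.mpr ⟨α, ?_⟩)
  linear_combination hαβ

theorem pow_notMem_span_pair_pow (hy : ∀ m : ℕ, y ^ m ∉ span {x}) {r : R} {k : ℕ}
    (h : r ∈ span {x, y ^ k}) (h' : r ∉ span {x, y ^ (k + 1)}) (n : ℕ) :
    r ^ n ∉ span {x, y ^ (n * k + 1)} := by
  intro hrn
  obtain ⟨u, hu, hdvd⟩ := exists_isUnit_dvd_sub_of_mem_span_pair_pow hM h h'
  obtain ⟨d, hd⟩ := hdvd.trans (sub_dvd_pow_sub_pow r (u * y ^ k) n)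
  have hmem : u ^ n * y ^ (n * k) ∈ span {x, y ^ (n * k + 1)} := by
    have hx : x * d ∈ span {x, y ^ (n * k + 1)} := mul_mem_right _ _ (subset_span (by simp))
    convert sub_mem hrn hx using 1
    rw [← hd]
    ring
  exact hy _ (pow_mem_span_singleton_of_mem_span_pair_pow_succ hM
    ((unit_mul_mem_iff_mem _ (hu.pow n)).mp hmem))

theorem not_isIntegralElem_span_pair_pow (hy : ∀ m : ℕ, y ^ m ∉ span {x}) {r : R} {k e : ℕ}
    (hke : k < e) (h : r ∈ span {x, y ^ k}) (h' : r ∉ span {x, y ^ (k + 1)}) :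
    ¬ (span {x, y ^ e} : Ideal R).IsIntegralElem r := by
  rintro ⟨n, -, c, hc, heq⟩
  refine pow_notMem_span_pair_pow hM hy h h' n ?_
  rw [eq_neg_of_add_eq_zero_left heq]
  refine neg_mem (sum_mem fun j hj ↦ ?_)
  obtain ⟨hj1, hjn⟩ := Finset.mem_Icc.mp hj
  have hcj := span_pair_pow_pow_le x y e j (hc j hj)
  have hrj := span_pair_pow_pow_le x y k (n - j) (pow_mem_pow h _)
  refine span_pair_pow_antitone x y ?_ (span_pair_pow_mul_le x y _ _ (mul_mem_mul hcj hrj))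
  obtain ⟨i, rfl⟩ := Nat.exists_eq_add_of_le hjn
  rw [Nat.add_sub_cancel_left]
  nlinarith

theorem intCl_span_pair_pow (hy : ∀ m : ℕ, y ^ m ∉ span {x}) (e : ℕ) :
    (span {x, y ^ e} : Ideal R).intCl = (span {x, y ^ e} : Set R) := by
  refine Set.Subset.antisymm (fun r hr ↦ ?_) fun r hr ↦ isIntegralElem_of_mem hr
  suffices ∀ k ≤ e, r ∈ span {x, y ^ k} from this e le_rfl
  intro k hk
  induction k with
  | zero => rw [span_pair_pow_zero]; exact Submodule.mem_top
  | succ k ih =>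
    by_contra h'
    exact not_isIntegralElem_span_pair_pow hM hy hk (ih (by omega)) h' hr

end SpanPairPow

theorem example_integrally_closed_general {R : Type*} [CommRing R]
    [IsNoetherianRing R] [IsLocalRing R] (x y : R)
    (hM : IsLocalRing.maximalIdeal R = Ideal.span {x, y})
    (hdim : ringKrullDim R = 2)
    (e : ℕ) :
    (Ideal.span {x, y ^ e} : Ideal R).intCl = (Ideal.span {x, y ^ e} : Set R) :=
  intCl_span_pair_pow hM (pow_notMem_span_singleton_of_ringKrullDim_eq_two hM hdim) e

theorem example_integrally_closed {R : Type*} [CommRing R] [IsDomain R]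
    [IsNoetherianRing R] [IsLocalRing R] (x y : R)
    (hM : IsLocalRing.maximalIdeal R = Ideal.span {x, y})
    (hdim : ringKrullDim R = 2)
    (e : ℕ) (he : 1 < e) :
    (Ideal.span {x, y ^ e} : Ideal R).intCl = (Ideal.span {x, y ^ e} : Set R) :=
  example_integrally_closed_general x y hM hdim e
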